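/- Fin'_ω embeds isomorphically into Fin_ω, i.e., Fin'_ω ⊑ Fin_ω. -/

import Mathlib

/-- `FinPow n` is the Fubini power `Fin^{n+1}` of the ideal of finite sets, an
ideal on `ω^{n+1}` (represented as `Fin (n+1) → ℕ`). -/
def FinPow : (n : ℕ) → Set (Set (Fin (n + 1) → ℕ))
  | 0 => {A | A.Finite}
  | n + 1 => {A | {k : ℕ | {y : Fin (n + 1) → ℕ | Fin.cons k y ∈ A} ∉ FinPow n}.Finite}

/-- Projection of `ω^n` onto the last `m` coordinates. -/
def lastProj {m n : ℕ} (h : m ≤ n) (x : Fin n → ℕ) : Fin m → ℕ :=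
  fun k => x ⟨n - m + k.val, by have := k.isLt; omega⟩

/-- The inductive limit `Fin_ω` of the Fubini powers `(Fin^n)_{n>0}` along the
projections onto the last coordinates. -/
def FinOmega : Set (Set (Σ n : ℕ, Fin (n + 1) → ℕ)) :=
  {M | ∃ m : ℕ, ∃ P : Set (Fin (m + 1) → ℕ), Pᶜ ∈ FinPow m ∧
    ∀ (n : ℕ) (h : m ≤ n), ∀ x : Fin (n + 1) → ℕ,
      lastProj (Nat.succ_le_succ h) x ∈ P → (⟨n, x⟩ : Σ n : ℕ, Fin (n + 1) → ℕ) ∉ M}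

/-- A system of partitions `{X_s : s ∈ ω^{n+1}}` of `ω` into infinite sets,
with all finite cross-intersections infinite. -/
structure PartitionSystem (X : (n : ℕ) → (Fin (n + 1) → ℕ) → Set ℕ) : Prop where
  infinite : ∀ n s, (X n s).Infinite
  disjoint : ∀ (n : ℕ) (s t : Fin (n + 1) → ℕ), s ≠ t → Disjoint (X n s) (X n t)
  cover : ∀ n : ℕ, (⋃ s, X n s) = Set.univ
  cross : ∀ (F : Finset ℕ) (s : ∀ i : ℕ, Fin (i + 1) → ℕ),
    (⋂ i ∈ F, X i (s i)).Infinite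

/-- The copy `Fin^{n+2}({X_s : s ∈ ω^{n+1}})` on `ω` of the Fubini power,
with partition pieces `X s`. -/
def FinPowCopy {n : ℕ} (X : (Fin (n + 1) → ℕ) → Set ℕ) : Set (Set ℕ) :=
  {A | {s : Fin (n + 1) → ℕ | ¬ (A ∩ X s).Finite} ∈ FinPow n}

/-- `Fin'_ω`: the ideal on `ω` generated by `⋃ n, Fin^{n+2}({X_s : s ∈ ω^{n+1}})`. -/
def FinOmega' (X : (n : ℕ) → (Fin (n + 1) → ℕ) → Set ℕ) : Set (Set ℕ) :=
  {A | ∃ F : Finset ℕ, ∃ B : ℕ → Set ℕ,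
    (∀ n ∈ F, B n ∈ FinPowCopy (X n)) ∧ A ⊆ ⋃ n ∈ F, B n}

/-!
Choose `f` sending every cell `x ∈ ω^{N+1}` into `X n (s)` for each `n < N`, where
`s ∈ ω^{n+1}` is the first `n + 1` of the last `n + 2` coordinates of `x`. These are finitely many constraints
whose intersection is infinite by the cross-intersection property, while the cells of
length one are unconstrained and absorb everything else, so such an `f` can be chosen
bijective. If `B ∈ Fin^{n+2}({X n s})`, then `S = {s | B ∩ X n s is infinite} ∈ Fin^{n+1}`,
and the last `n + 2` coordinates of the cells in `f⁻¹[B]` have finite fibres over every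
`s ∉ S`, because `f` is injective and lands in `X n s`. Hence they form a `Fin^{n+2}`-small
set, so `f⁻¹[B] ∈ Fin_ω`, and `Fin_ω` is an ideal.
-/

open Function Set Filter

theorem Fin.init_cons {α : Type*} {n : ℕ} (a : α) (y : Fin (n + 1) → α) :
    Fin.init (Fin.cons a y : Fin (n + 2) → α) = Fin.cons a (Fin.init y) := by
  funext i
  induction i using Fin.cases with
  | zero => rfl
  | succ i => simp only [Fin.init, Fin.cons_succ, ← Fin.succ_castSucc]

theorem lastProj_self {n : ℕ} (h : n ≤ n) : lastProj h = id := by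
  funext x k
  simp [lastProj]

theorem lastProj_cons {m n : ℕ} (h : m ≤ n) (h' : m ≤ n + 1) (k : ℕ) (y : Fin n → ℕ) :
    lastProj h' (Fin.cons k y) = lastProj h y := by
  funext j
  have hj := j.isLt
  have hsucc : (⟨n + 1 - m + j, by omega⟩ : Fin (n + 1)) = Fin.succ ⟨n - m + j, by omega⟩ :=
    Fin.ext (by simp; omega)
  simp only [lastProj, hsucc, Fin.cons_succ]

theorem lastProj_lastProj {a b c : ℕ} (hab : a ≤ b) (hbc : b ≤ c) (hac : a ≤ c)
    (x : Fin c → ℕ) : lastProj hab (lastProj hbc x) = lastProj hac x := by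
  funext j
  have hj := j.isLt
  simp only [lastProj]
  congr 1
  exact Fin.ext (by simp; omega)

theorem finPow_mono {n : ℕ} {A B : Set (Fin (n + 1) → ℕ)} (hAB : A ⊆ B) (hB : B ∈ FinPow n) :
    A ∈ FinPow n := by
  induction n with
  | zero => exact hB.subset hAB
  | succ n ih => exact hB.subset fun k hk hBk => hk (ih (fun y hy => hAB hy) hBk)

theorem finPow_union {n : ℕ} {A B : Set (Fin (n + 1) → ℕ)} (hA : A ∈ FinPow n)
    (hB : B ∈ FinPow n) : A ∪ B ∈ FinPow n := by
  induction n with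
  | zero => exact hA.union hB
  | succ n ih =>
    refine (hA.union hB).subset fun k hk => ?_
    by_contra h
    exact hk (ih (not_not.1 fun hA' => h (Or.inl hA')) (not_not.1 fun hB' => h (Or.inr hB')))

theorem finPow_preimage_lastProj {n m : ℕ} (h : n ≤ m) {S : Set (Fin (n + 1) → ℕ)}
    (hS : S ∈ FinPow n) : lastProj (Nat.succ_le_succ h) ⁻¹' S ∈ FinPow m := by
  induction m, h using Nat.le_induction with
  | base => rwa [lastProj_self, preimage_id]
  | succ m hnm ih =>
    refine finite_empty.subset fun k hk => hk ?_
    convert ih using 2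
    ext y
    exact iff_of_eq (congrArg (· ∈ S) (lastProj_cons (Nat.succ_le_succ hnm) _ k y))

theorem infinite_fiber_cons_iff {n : ℕ} (W : Set (Fin (n + 2) → ℕ)) (k : ℕ)
    (s : Fin n → ℕ) :
    {y | Fin.cons k y ∈ W ∧ Fin.init y = s}.Infinite ↔
      {z | z ∈ W ∧ Fin.init z = Fin.cons k s}.Infinite := by
  have himage : Fin.cons k '' {y | Fin.cons k y ∈ W ∧ Fin.init y = s} =
      {z | z ∈ W ∧ Fin.init z = Fin.cons k s} := by
    ext z
    obtain ⟨a, y, rfl⟩ : ∃ a y, z = Fin.cons a y := ⟨z 0, Fin.tail z, (Fin.cons_self_tail z).symm⟩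
    rcases eq_or_ne a k with rfl | hak
    · simp [Fin.init_cons, Fin.cons_inj]
    · simp [Fin.init_cons, Fin.cons_inj, hak, hak.symm]
  rw [← himage]
  exact (infinite_image_iff (Fin.cons_right_injective (α := fun _ => ℕ) k).injOn).symm

theorem finPow_succ_of_finPow_infinite_fibers {n : ℕ} {W : Set (Fin (n + 2) → ℕ)}
    (hW : {s | {z | z ∈ W ∧ Fin.init z = s}.Infinite} ∈ FinPow n) : W ∈ FinPow (n + 1) := by
  induction n with
  | zero =>
    refine (hW.preimage (Fin.cons_left_injective (Fin.elim0 : Fin 0 → ℕ)).injOn).subset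
      fun k hk => ?_
    have hk' : {y : Fin 1 → ℕ | Fin.cons k y ∈ W}.Infinite := hk
    show {z | z ∈ W ∧ Fin.init z = Fin.cons k Fin.elim0}.Infinite
    rw [← infinite_fiber_cons_iff]
    simpa [Subsingleton.elim _ (Fin.elim0 : Fin 0 → ℕ)] using hk'
  | succ n ih =>
    refine hW.subset fun k hk hTk => hk (ih ?_)
    convert hTk using 2
    ext s
    exact infinite_fiber_cons_iff W k s

section FinOmega

variable {M M₁ M₂ : Set (Σ n : ℕ, Fin (n + 1) → ℕ)}

theorem finOmega_mono (h : M₁ ⊆ M₂) (hM₂ : M₂ ∈ FinOmega) : M₁ ∈ FinOmega := by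
  obtain ⟨m, P, hP, hM⟩ := hM₂
  exact ⟨m, P, hP, fun n hn x hx hxM => hM n hn x hx (h hxM)⟩

theorem empty_mem_finOmega : (∅ : Set (Σ n : ℕ, Fin (n + 1) → ℕ)) ∈ FinOmega :=
  ⟨0, univ, by simp [FinPow], fun _ _ _ _ => notMem_empty _⟩

theorem eventually_finOmega_witness (hM : M ∈ FinOmega) :
    ∀ᶠ m in atTop, ∃ P : Set (Fin (m + 1) → ℕ), Pᶜ ∈ FinPow m ∧
      ∀ (n : ℕ) (h : m ≤ n), ∀ x : Fin (n + 1) → ℕ,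
        lastProj (Nat.succ_le_succ h) x ∈ P → (⟨n, x⟩ : Σ n : ℕ, Fin (n + 1) → ℕ) ∉ M := by
  obtain ⟨m, P, hP, hM⟩ := hM
  filter_upwards [eventually_ge_atTop m] with m' hm'
  refine ⟨lastProj (Nat.succ_le_succ hm') ⁻¹' P, finPow_preimage_lastProj hm' hP, ?_⟩
  intro n hn x hx
  exact hM n (hm'.trans hn) x (lastProj_lastProj _ _ _ x ▸ hx)

theorem union_mem_finOmega (h₁ : M₁ ∈ FinOmega) (h₂ : M₂ ∈ FinOmega) :
    M₁ ∪ M₂ ∈ FinOmega := by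
  obtain ⟨m, ⟨P₁, hP₁, hM₁⟩, ⟨P₂, hP₂, hM₂⟩⟩ :=
    ((eventually_finOmega_witness h₁).and (eventually_finOmega_witness h₂)).exists
  refine ⟨m, P₁ ∩ P₂, compl_inter P₁ P₂ ▸ finPow_union hP₁ hP₂, ?_⟩
  rintro n hn x ⟨hx₁, hx₂⟩ (hxM | hxM)
  exacts [hM₁ n hn x hx₁ hxM, hM₂ n hn x hx₂ hxM]

theorem biUnion_mem_finOmega {ι : Type*} (F : Finset ι) {M : ι → Set (Σ n : ℕ, Fin (n + 1) → ℕ)}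
    (h : ∀ i ∈ F, M i ∈ FinOmega) : (⋃ i ∈ F, M i) ∈ FinOmega := by
  classical
  induction F using Finset.induction_on with
  | empty => simpa using empty_mem_finOmega
  | insert a F _ ih =>
    rw [Finset.set_biUnion_insert]
    exact union_mem_finOmega (h a (F.mem_insert_self a))
      (ih fun i hi => h i (Finset.mem_insert_of_mem hi))

end FinOmega

def cellTargets (X : (n : ℕ) → (Fin (n + 1) → ℕ) → Set ℕ) (c : Σ n : ℕ, Fin (n + 1) → ℕ) :
    Set ℕ :=
  {b | ∀ n (h : n + 1 ≤ c.1), b ∈ X n (Fin.init (lastProj (Nat.succ_le_succ h) c.2))}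

theorem PartitionSystem.cellTargets_infinite {X : (n : ℕ) → (Fin (n + 1) → ℕ) → Set ℕ}
    (hX : PartitionSystem X) (c : Σ n : ℕ, Fin (n + 1) → ℕ) : (cellTargets X c).Infinite := by
  classical
  refine (hX.cross (Finset.range c.1) fun i =>
    if h : i + 1 ≤ c.1 then Fin.init (lastProj (Nat.succ_le_succ h) c.2) else 0).mono ?_
  intro b hb n hn
  have hbn := mem_iInter₂.1 hb n (Finset.mem_range.2 hn)
  rwa [dif_pos hn] at hbn

theorem infinite_setOf_cellTargets_eq_univ (X : (n : ℕ) → (Fin (n + 1) → ℕ) → Set ℕ) :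
    {c | cellTargets X c = univ}.Infinite := by
  refine infinite_of_injective_forall_mem
    (f := fun k : ℕ => (⟨0, fun _ => k⟩ : Σ n : ℕ, Fin (n + 1) → ℕ))
    (sigma_mk_injective.comp const_injective) fun k => ?_
  exact eq_univ_of_forall fun b n h => absurd h (Nat.not_succ_le_zero n)

theorem preimage_mem_finOmega {X : (n : ℕ) → (Fin (n + 1) → ℕ) → Set ℕ}
    {f : (Σ n : ℕ, Fin (n + 1) → ℕ) → ℕ} (hf : Injective f) (hfX : ∀ c, f c ∈ cellTargets X c)
    {n : ℕ} {B : Set ℕ} (hB : B ∈ FinPowCopy (X n)) : f ⁻¹' B ∈ FinOmega := by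
  set W : Set (Fin (n + 2) → ℕ) := {z | ∃ (c : Σ N : ℕ, Fin (N + 1) → ℕ) (h : n + 1 ≤ c.1),
    f c ∈ B ∧ lastProj (Nat.succ_le_succ h) c.2 = z}
  refine ⟨n + 1, Wᶜ, ?_, fun N hN x hx hxB => hx ⟨⟨N, x⟩, hN, hxB, rfl⟩⟩
  rw [compl_compl]
  have hS : {s | ¬ (B ∩ X n s).Finite} ∈ FinPow n := hB
  refine finPow_succ_of_finPow_infinite_fibers (finPow_mono ?_ hS)
  intro s hs hfin
  apply hs
  have hcells : {c | n + 1 ≤ c.1 ∧ f c ∈ B ∩ X n s}.Finite :=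
    (hfin.preimage hf.injOn).subset fun c hc => hc.2
  refine (hcells.dependent_image fun c hc => lastProj (Nat.succ_le_succ hc.1) c.2).subset ?_
  rintro z ⟨⟨c, hc, hcB, rfl⟩, hinit⟩
  exact ⟨c, ⟨hc, hcB, hinit ▸ hfX c n hc⟩, rfl⟩

theorem exists_injective_forall_mem_nat (Y : ℕ → Set ℕ) (hY : ∀ i, (Y i).Infinite) :
    ∃ g : ℕ → ℕ, Injective g ∧ (range g)ᶜ.Infinite ∧ ∀ i, g i ∈ Y i := by
  choose next hnextY hnext_gt using fun i a => (hY i).exists_gt a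
  -- leaving a gap after each value keeps every `g i + 1` out of the range
  let g : ℕ → ℕ := fun i => Nat.rec (next 0 0) (fun i gi => next (i + 1) (gi + 1)) i
  have hgY : ∀ i, g i ∈ Y i := by rintro (_ | i) <;> exact hnextY _ _
  have hgap : ∀ i, g i + 1 < g (i + 1) := fun i => hnext_gt _ _
  have hmono : StrictMono g := strictMono_nat_of_lt_succ fun i => (g i).lt_succ_self.trans (hgap i)
  refine ⟨g, hmono.injective, ?_, hgY⟩
  refine infinite_of_injective_forall_mem (f := fun i => g i + 1)
    (fun i j h => hmono.injective (Nat.succ_injective h)) ?_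
  rintro i ⟨j, hj⟩
  rcases lt_or_ge i j with hij | hij
  · have := hmono.monotone (show i + 1 ≤ j from hij)
    have := hgap i
    omega
  · have := hmono.monotone hij
    omega

theorem exists_injective_forall_mem {ι : Type*} [Countable ι] (Y : ι → Set ℕ)
    (hY : ∀ i, (Y i).Infinite) :
    ∃ g : ι → ℕ, Injective g ∧ (range g)ᶜ.Infinite ∧ ∀ i, g i ∈ Y i := by
  obtain ⟨e, he⟩ := Countable.exists_injective_nat ι
  obtain ⟨g, hg, hcompl, hgY⟩ := exists_injective_forall_mem_nat (extend e Y fun _ => univ)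
    fun j => by
      by_cases hj : ∃ i, e i = j
      · obtain ⟨i, rfl⟩ := hj
        rw [he.extend_apply]
        exact hY i
      · rw [extend_apply' _ _ _ hj]
        exact infinite_univ
  refine ⟨g ∘ e, hg.comp he, hcompl.mono (compl_subset_compl.2 (range_comp_subset_range e g)),
    fun i => ?_⟩
  simpa [he.extend_apply] using hgY (e i)

theorem exists_bijective_forall_mem {γ : Type*} [Countable γ] (Y : γ → Set ℕ)
    (hY : ∀ c, (Y c).Infinite) (hfree : {c | Y c = univ}.Infinite) :
    ∃ f : γ → ℕ, Bijective f ∧ ∀ c, f c ∈ Y c := by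
  classical
  obtain ⟨g, hg, hcompl, hgY⟩ :=
    exists_injective_forall_mem (fun c : {c // Y c ≠ univ} => Y c) fun c => hY c
  have : Infinite {c // Y c = univ} := hfree.to_subtype
  have : Infinite ↥(range g)ᶜ := hcompl.to_subtype
  obtain ⟨φ⟩ := nonempty_equiv_of_countable (α := {c // Y c = univ}) (β := ↥(range g)ᶜ)
  let e : γ ≃ ℕ := (Equiv.sumCompl fun c => Y c = univ).symm.trans <| (Equiv.sumComm _ _).trans <|
    (Equiv.sumCongr (Equiv.ofInjective g hg) φ).trans (Equiv.Set.sumCompl (range g))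
  refine ⟨e, e.bijective, fun c => ?_⟩
  by_cases hc : Y c = univ
  · simp [hc]
  · have hec : e c = g ⟨c, hc⟩ := by
      simp only [e, Equiv.trans_apply,
        Equiv.sumCompl_symm_apply_of_neg (p := fun c => Y c = univ) hc]
      simp
    exact hec ▸ hgY ⟨c, hc⟩

/-- `Fin'_ω` embeds isomorphically into `Fin_ω`: there is a
bijection `f : ∑_{i>0} ω^i → ω` with `f⁻¹[A] ∈ Fin_ω` for all `A ∈ Fin'_ω`. -/
theorem finOmega'_isoContained_finOmega
    (X : (n : ℕ) → (Fin (n + 1) → ℕ) → Set ℕ) (hX : PartitionSystem X) :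
    ∃ f : (Σ n : ℕ, Fin (n + 1) → ℕ) → ℕ, Function.Bijective f ∧
      ∀ A ∈ FinOmega' X, f ⁻¹' A ∈ FinOmega := by
  obtain ⟨f, hf, hfX⟩ := exists_bijective_forall_mem (cellTargets X) hX.cellTargets_infinite
    (infinite_setOf_cellTargets_eq_univ X)
  refine ⟨f, hf, ?_⟩
  rintro A ⟨F, B, hB, hAB⟩
  refine finOmega_mono (preimage_mono hAB) ?_
  rw [preimage_iUnion₂]
  exact biUnion_mem_finOmega F fun n hn => preimage_mem_finOmega hf.injective hfX (hB n hn)
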